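/- The Δ-profile of any subspace W ⊆ F_q^n is a weakly decreasing sequence: if μ_j := dim(W + ΔW + ⋯ + Δ^{j-1}W) − dim(W + ΔW + ⋯ + Δ^{j-2}W) for j ≥ 1 (with the empty sum having dimension 0), then μ₁ ≥ μ₂ ≥ μ₃ ≥ ⋯. -/

import Mathlib

/-!
With `S j = W + Δ W + ⋯ + Δ^{j-1} W` one has `S (j + 1) = W + Δ (S j)`. Applying `Δ` to the
pair `S j ≤ S (j + 1)` cannot increase the gap between their dimensions (rank–nullity), and
neither can adding `W` to both (modular law), so the increments `dim S (j + 1) - dim S j`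
never grow.
-/

open Finset

/-- `flagDim f W j = dim (W + f W + ⋯ + f^{j-1} W)`. -/
noncomputable def flagDim (F : Type*) [Field F] {n : ℕ}
    (f : Module.End F (Fin n → F)) (W : Submodule F (Fin n → F)) (j : ℕ) : ℕ :=
  Module.finrank F ↥(⨆ i ∈ Finset.range j, W.map (f ^ i))

namespace Submodule

open Module

variable {F M N : Type*} [DivisionRing F] [AddCommGroup M] [Module F M] [AddCommGroup N]
  [Module F N]

theorem finrank_sup_add_le_finrank_sup_add [FiniteDimensional F M] (X : Submodule F M)
    {A B : Submodule F M} (hBA : B ≤ A) :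
    finrank F ↥(X ⊔ A) + finrank F ↥B ≤ finrank F ↥(X ⊔ B) + finrank F ↥A := by
  have modular := finrank_sup_add_finrank_inf_eq (X ⊔ B) A
  rw [sup_assoc, sup_eq_right.2 hBA] at modular
  have : finrank F ↥B ≤ finrank F ↥((X ⊔ B) ⊓ A) := finrank_mono (le_inf le_sup_right hBA)
  omega

theorem finrank_map_add_finrank_inf_ker (f : M →ₗ[F] N) (C : Submodule F M)
    [FiniteDimensional F C] :
    finrank F ↥(C.map f) + finrank F ↥(C ⊓ LinearMap.ker f) = finrank F ↥C := by
  rw [← LinearMap.finrank_range_add_finrank_ker (f.domRestrict C), LinearMap.range_domRestrict,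
    LinearMap.ker_domRestrict, ← finrank_map_subtype_eq, map_comap_subtype]

theorem finrank_map_add_le_finrank_add_finrank_map [FiniteDimensional F M] (f : M →ₗ[F] N)
    {A B : Submodule F M} (hBA : B ≤ A) :
    finrank F ↥(A.map f) + finrank F ↥B ≤ finrank F ↥A + finrank F ↥(B.map f) := by
  have hA := finrank_map_add_finrank_inf_ker f A
  have hB := finrank_map_add_finrank_inf_ker f B
  have : finrank F ↥(B ⊓ LinearMap.ker f) ≤ finrank F ↥(A ⊓ LinearMap.ker f) :=
    finrank_mono (inf_le_inf_right _ hBA)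
  omega

theorem iSup_range_map_pow_mono (f : Module.End F M) (W : Submodule F M) {j k : ℕ} (h : j ≤ k) :
    ⨆ i ∈ range j, W.map (f ^ i) ≤ ⨆ i ∈ range k, W.map (f ^ i) :=
  biSup_mono fun _ hi => range_subset_range.2 h hi

theorem iSup_range_succ_map_pow (f : Module.End F M) (W : Submodule F M) (j : ℕ) :
    ⨆ i ∈ range (j + 1), W.map (f ^ i) = W ⊔ (⨆ i ∈ range j, W.map (f ^ i)).map f := by
  rw [range_add_one', map_eq_image, Finset.iSup_insert, iSup_finset_image, pow_zero,
    Module.End.one_eq_id, map_id]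
  simp only [Submodule.map_iSup, ← map_comp, ← Module.End.mul_eq_comp, ← pow_succ']
  rfl

theorem finrank_iSup_range_map_pow_sub_le [FiniteDimensional F M] (f : Module.End F M)
    (W : Submodule F M) (j : ℕ) :
    finrank F ↥(⨆ i ∈ range (j + 2), W.map (f ^ i))
        - finrank F ↥(⨆ i ∈ range (j + 1), W.map (f ^ i))
      ≤ finrank F ↥(⨆ i ∈ range (j + 1), W.map (f ^ i))
        - finrank F ↥(⨆ i ∈ range j, W.map (f ^ i)) := by
  rw [iSup_range_succ_map_pow f W (j + 1)]
  set B := ⨆ i ∈ range j, W.map (f ^ i)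
  set A := ⨆ i ∈ range (j + 1), W.map (f ^ i)
  have hBA : B ≤ A := iSup_range_map_pow_mono f W j.le_succ
  have hA : A = W ⊔ B.map f := iSup_range_succ_map_pow f W j
  have h_sup := finrank_sup_add_le_finrank_sup_add W (map_mono (f := f) hBA)
  have h_map := finrank_map_add_le_finrank_add_finrank_map f hBA
  have h_mono : finrank F ↥B ≤ finrank F ↥A := finrank_mono hBA
  rw [← hA] at h_sup
  omega

end Submodule

theorem profile_weakly_decreasing_general (F : Type*) [Field F] (n : ℕ)
    (f : Module.End F (Fin n → F)) (W : Submodule F (Fin n → F)) (j : ℕ) :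
    flagDim F f W (j + 2) - flagDim F f W (j + 1) ≤
      flagDim F f W (j + 1) - flagDim F f W j :=
  Submodule.finrank_iSup_range_map_pow_sub_le f W j

/-- The `Δ`-profile of a subspace is weakly decreasing: with
`μ_j = dim(W + ΔW + ⋯ + Δ^{j-1}W) − dim(W + ΔW + ⋯ + Δ^{j-2}W)`, one has
`μ₁ ≥ μ₂ ≥ ⋯`. -/
theorem profile_weakly_decreasing (F : Type*) [Field F] [Fintype F] (n : ℕ)
    (f : Module.End F (Fin n → F)) (W : Submodule F (Fin n → F)) (j : ℕ) :
    flagDim F f W (j + 2) - flagDim F f W (j + 1) ≤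
      flagDim F f W (j + 1) - flagDim F f W j :=
  profile_weakly_decreasing_general F n f W j
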